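/- arXiv:1003.4160 — 4 statements merged into one kernel-verified Lean document; each statement's English description precedes it below -/
import Mathlib

section
/- Let ρ : [0,∞) → [0,1/2] be continuous and α : [0,∞) → [0,∞) integrable, satisfying ρ(t₂) - ρ(t₁) ≤ -∫_{t₁}^{t₂} α(s) ρ(s)^{(N-1)/N} ds for all 0 ≤ t₁ ≤ t₂. Then for all t ≥ 0, ρ(t) ≤ max(ρ(0)^{1/N} - (1/N)∫_0^t α(s) ds, 0)^N. -/
open MeasureTheory Set

private lemma aux_pow_sub (n : ℕ) {a b : ℝ} (hb : 0 ≤ b) (hab : b ≤ a) :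
    a ^ n - b ^ n ≤ n * a ^ (n - 1) * (a - b) := by
  have ha : 0 ≤ a := hb.trans hab
  rw [← geom_sum₂_mul a b n]
  refine mul_le_mul_of_nonneg_right ?_ (sub_nonneg.2 hab)
  calc ∑ i ∈ Finset.range n, a ^ i * b ^ (n - 1 - i)
      ≤ ∑ i ∈ Finset.range n, a ^ (n - 1) := by
        refine Finset.sum_le_sum fun i hi => ?_
        have hi' := Finset.mem_range.1 hi
        calc a ^ i * b ^ (n - 1 - i) ≤ a ^ i * a ^ (n - 1 - i) :=
              mul_le_mul_of_nonneg_left (pow_le_pow_left₀ hb hab _) (pow_nonneg ha i)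
          _ = a ^ (i + (n - 1 - i)) := (pow_add a i _).symm
          _ = a ^ (n - 1) := by congr 1; omega
    _ = n * a ^ (n - 1) := by
        rw [Finset.sum_const, Finset.card_range, nsmul_eq_mul]

theorem stmt0 (N : ℕ) (hN : 1 ≤ N) (ρ α : ℝ → ℝ)
    (hρc : Continuous ρ) (hρ : ∀ t, 0 ≤ t → ρ t ∈ Set.Icc (0:ℝ) (1/2))
    (hα : ∀ t, 0 ≤ t → 0 ≤ α t)
    (hαint : MeasureTheory.IntegrableOn α (Set.Ici 0))
    (hineq : ∀ t₁ t₂, 0 ≤ t₁ → t₁ ≤ t₂ →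
      ρ t₂ - ρ t₁ ≤ -∫ s in t₁..t₂, α s * (ρ s) ^ (((N:ℝ) - 1)/N)) :
    ∀ t, 0 ≤ t →
      ρ t ≤ (max ((ρ 0) ^ ((1:ℝ)/N) - (1/N) * ∫ s in (0:ℝ)..t, α s) 0) ^ N := by
  have hN0 : (0:ℝ) < N := by exact_mod_cast hN
  set p : ℝ := ((N:ℝ) - 1)/N with hpdef
  have hp : 0 ≤ p := by
    apply div_nonneg _ hN0.le
    have : (1:ℝ) ≤ (N:ℝ) := by exact_mod_cast hN
    linarith
  set u : ℝ → ℝ := fun s => ρ s ^ ((1:ℝ)/N) with hudef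
  have huc : Continuous u := hρc.rpow_const (fun x => Or.inr (by positivity))
  -- ρ is nonincreasing on [0, ∞)
  have hmono : ∀ t₁ t₂, 0 ≤ t₁ → t₁ ≤ t₂ → ρ t₂ ≤ ρ t₁ := by
    intro t₁ t₂ h1 h12
    have h0 : 0 ≤ ∫ s in t₁..t₂, α s * ρ s ^ p := by
      refine intervalIntegral.integral_nonneg h12 fun x hx => ?_
      exact mul_nonneg (hα x (h1.trans hx.1)) (Real.rpow_nonneg (hρ x (h1.trans hx.1)).1 p)
    have := hineq t₁ t₂ h1 h12
    linarith
  -- identities between ρ and u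
  have hu0 : ∀ s, 0 ≤ s → ρ s = u s ^ N := by
    intro s hs
    rw [hudef]
    rw [← Real.rpow_natCast (ρ s ^ ((1:ℝ)/N)) N, ← Real.rpow_mul (hρ s hs).1,
      one_div_mul_cancel (by positivity : (N:ℝ) ≠ 0), Real.rpow_one]
  have hup : ∀ s, 0 ≤ s → ρ s ^ p = u s ^ (N - 1) := by
    intro s hs
    rw [hudef]
    rw [← Real.rpow_natCast (ρ s ^ ((1:ℝ)/N)) (N-1), ← Real.rpow_mul (hρ s hs).1]
    congr 1
    rw [hpdef, Nat.cast_sub hN]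
    push_cast
    ring
  have hu_nonneg : ∀ s, 0 ≤ s → 0 ≤ u s := fun s hs => Real.rpow_nonneg (hρ s hs).1 _
  have hu_mono : ∀ t₁ t₂, 0 ≤ t₁ → t₁ ≤ t₂ → u t₂ ≤ u t₁ := fun t₁ t₂ h1 h12 =>
    Real.rpow_le_rpow (hρ t₂ (h1.trans h12)).1 (hmono t₁ t₂ h1 h12) (by positivity)
  -- the globally integrable version of α
  set β : ℝ → ℝ := (Set.Ici (0:ℝ)).indicator α with hβdef
  have hβ : Integrable β := (integrable_indicator_iff measurableSet_Ici).2 hαint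
  have hβα : ∀ t₁ t₂, 0 ≤ t₁ → t₁ ≤ t₂ →
      (∫ s in t₁..t₂, β s) = ∫ s in t₁..t₂, α s := by
    intro t₁ t₂ h1 h12
    refine intervalIntegral.integral_congr fun x hx => ?_
    rw [Set.uIcc_of_le h12] at hx
    exact Set.indicator_of_mem (mem_Ici.2 (h1.trans hx.1)) α
  set A : ℝ → ℝ := fun s => ∫ x in (0:ℝ)..s, β x with hAdef
  have hAc : Continuous A :=
    intervalIntegral.continuous_primitive (fun a b => hβ.intervalIntegrable) 0
  -- key integral estimate
  have key : ∀ s₁ s₂, 0 ≤ s₁ → s₁ ≤ s₂ →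
      ρ s₂ ^ p * ∫ x in s₁..s₂, α x ≤ ρ s₁ - ρ s₂ := by
    intro s₁ s₂ h1 h12
    have hsub : Icc s₁ s₂ ⊆ Ici (0:ℝ) := fun x hx => le_trans h1 hx.1
    have Iα : IntegrableOn α (Icc s₁ s₂) := hαint.mono_set hsub
    have ii_α : IntervalIntegrable α volume s₁ s₂ :=
      (intervalIntegrable_iff_integrableOn_Icc_of_le h12).2 Iα
    have ii_prod : IntervalIntegrable (fun x => α x * ρ x ^ p) volume s₁ s₂ := by
      rw [intervalIntegrable_iff_integrableOn_Icc_of_le h12]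
      have hb : ∀ᵐ x ∂(volume.restrict (Icc s₁ s₂)), ‖ρ x ^ p‖ ≤ 1 := by
        filter_upwards [ae_restrict_mem measurableSet_Icc] with x hx
        have hm := hρ x (hsub hx)
        rw [Real.norm_eq_abs, abs_of_nonneg (Real.rpow_nonneg hm.1 p)]
        exact Real.rpow_le_one hm.1 (by linarith [hm.2]) hp
      have : IntegrableOn (fun x => ρ x ^ p * α x) (Icc s₁ s₂) :=
        Iα.bdd_mul ((hρc.rpow_const fun x => Or.inr hp).aestronglyMeasurable.restrict) hb
      simpa [mul_comm] using this
    have hmono2 : (∫ x in s₁..s₂, ρ s₂ ^ p * α x) ≤ ∫ x in s₁..s₂, α x * ρ x ^ p := by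
      refine intervalIntegral.integral_mono_on h12 (ii_α.const_mul _) ii_prod fun x hx => ?_
      rw [mul_comm]
      exact mul_le_mul_of_nonneg_left
        (Real.rpow_le_rpow (hρ s₂ (h1.trans h12)).1 (hmono x s₂ (hsub hx) hx.2) hp)
        (hα x (hsub hx))
    rw [intervalIntegral.integral_const_mul] at hmono2
    have := hineq s₁ s₂ h1 h12
    linarith
  intro t ht
  rcases le_or_gt (ρ t) 0 with hρt | hρt
  · have : ρ t = 0 := le_antisymm hρt (hρ t ht).1
    rw [this]
    exact pow_nonneg (le_max_right _ _) N
  -- main case: ρ t > 0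
  have claim : ∀ c ∈ Set.Ioo (0:ℝ) 1, c * ((1/N) * ∫ s in (0:ℝ)..t, α s) ≤ u 0 - u t := by
    intro c hc
    set S : Set ℝ := {s | c * ((1/N) * A s) ≤ u 0 - u s} with hSdef
    have hSclosed : IsClosed S := isClosed_le (by fun_prop) (by fun_prop)
    have h0S : (0:ℝ) ∈ S := by
      simp [hSdef, hAdef, intervalIntegral.integral_same]
    have hsubS : Icc (0:ℝ) t ⊆ S := by
      refine (hSclosed.inter isClosed_Icc).Icc_subset_of_forall_exists_gt h0S ?_
      rintro x ⟨hxS, hx0, hxt⟩ y hy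
      have hρx : 0 < ρ x := lt_of_lt_of_le hρt (hmono x t hx0 hxt.le)
      have hux : 0 < u x := Real.rpow_pos_of_pos hρx _
      have huxp : 0 < u x ^ (N - 1) := pow_pos hux _
      have hlt : c * u x ^ (N - 1) < u x ^ (N - 1) := by
        nlinarith [hc.2, hc.1]
      have hcont : ContinuousAt (fun z => u z ^ (N - 1)) x := (huc.pow _).continuousAt
      have hev : ∀ᶠ z in nhds x, c * u x ^ (N - 1) < u z ^ (N - 1) :=
        hcont.eventually (eventually_gt_nhds hlt)
      rcases Metric.eventually_nhds_iff_ball.1 hev with ⟨δ, hδ, hball⟩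
      set z : ℝ := min y (min (x + δ/2) t) with hzdef
      have hxz : x < z := by
        simp only [hzdef, lt_min_iff]
        exact ⟨hy, by linarith, hxt⟩
      have hzt : z ≤ t := le_trans (min_le_right _ _) (min_le_right _ _)
      have hzy : z ≤ y := min_le_left _ _
      have hz0 : 0 ≤ z := le_trans hx0 hxz.le
      have hzball : z ∈ Metric.ball x δ := by
        rw [Metric.mem_ball, Real.dist_eq, abs_of_nonneg (by linarith)]
        have : z ≤ x + δ/2 := le_trans (min_le_right _ _) (min_le_left _ _)
        linarith
      have hzpow : c * u x ^ (N - 1) < u z ^ (N - 1) := hball z hzball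
      -- key estimate on [x, z]
      have hk := key x z hx0 hxz.le
      have hInonneg : 0 ≤ ∫ w in x..z, α w :=
        intervalIntegral.integral_nonneg hxz.le fun w hw => hα w (hx0.trans hw.1)
      have hpow : ρ x - ρ z ≤ N * u x ^ (N - 1) * (u x - u z) := by
        rw [hu0 x hx0, hu0 z hz0]
        exact aux_pow_sub N (hu_nonneg z hz0) (hu_mono x z hx0 hxz.le)
      rw [hup z hz0] at hk
      have hchain : c * u x ^ (N - 1) * ∫ w in x..z, α w ≤
          N * u x ^ (N - 1) * (u x - u z) := by
        calc c * u x ^ (N - 1) * ∫ w in x..z, α w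
            ≤ u z ^ (N - 1) * ∫ w in x..z, α w :=
              mul_le_mul_of_nonneg_right hzpow.le hInonneg
          _ ≤ ρ x - ρ z := hk
          _ ≤ _ := hpow
      have h1 : c * (∫ w in x..z, α w) ≤ N * (u x - u z) := by
        have h2 : (c * ∫ w in x..z, α w) * u x ^ (N - 1) ≤
            (N * (u x - u z)) * u x ^ (N - 1) := by
          calc (c * ∫ w in x..z, α w) * u x ^ (N - 1)
              = c * u x ^ (N - 1) * ∫ w in x..z, α w := by ring
            _ ≤ N * u x ^ (N - 1) * (u x - u z) := hchain
            _ = (N * (u x - u z)) * u x ^ (N - 1) := by ring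
        exact le_of_mul_le_mul_right h2 huxp
      have hdiv : c * ((1/N) * ∫ w in x..z, α w) ≤ u x - u z := by
        rw [show c * ((1/N) * ∫ w in x..z, α w) = (c * ∫ w in x..z, α w) / (N:ℝ) by ring]
        rw [div_le_iff₀ hN0]
        linarith [h1]
      -- additivity of A
      have hAzx : A z - A x = ∫ w in x..z, α w := by
        have hadd := intervalIntegral.integral_add_adjacent_intervals
          (hβ.intervalIntegrable (a := 0) (b := x)) (hβ.intervalIntegrable (a := x) (b := z))
        have : A z = A x + ∫ w in x..z, β w := by rw [hAdef]; simp only; linarith [hadd]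
        rw [this, hβα x z hx0 hxz.le]; ring
      refine ⟨z, ?_, hxz, hzy⟩
      have hxS' : c * ((1/N) * A x) ≤ u 0 - u x := hxS
      show c * ((1/N) * A z) ≤ u 0 - u z
      have : A z = A x + (A z - A x) := by ring
      rw [this, hAzx]
      have expand : c * ((1/N) * (A x + ∫ w in x..z, α w)) =
          c * ((1/N) * A x) + c * ((1/N) * ∫ w in x..z, α w) := by ring
      rw [expand]
      linarith
    have htS : t ∈ S := hsubS ⟨ht, le_refl t⟩
    have : c * ((1/N) * A t) ≤ u 0 - u t := htS
    have hAt : A t = ∫ s in (0:ℝ)..t, α s := hβα 0 t (le_refl 0) ht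
    rwa [hAt] at this
  -- pass to the limit c → 1
  have hX : 0 ≤ u 0 - u t := sub_nonneg.2 (hu_mono 0 t (le_refl 0) ht)
  set B : ℝ := (1/N) * ∫ s in (0:ℝ)..t, α s with hBdef
  have hBX : B ≤ u 0 - u t := by
    rcases le_or_gt B 0 with hB | hB
    · linarith
    · by_contra h
      push_neg at h
      set X : ℝ := u 0 - u t with hXdef
      set c : ℝ := (X/B + 1)/2 with hcdef
      have hc1 : X/B < 1 := (div_lt_one hB).2 h
      have hc0 : 0 ≤ X/B := div_nonneg hX hB.le
      have hcIoo : c ∈ Set.Ioo (0:ℝ) 1 := ⟨by rw [hcdef]; linarith, by rw [hcdef]; linarith⟩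
      have := claim c hcIoo
      have hgt : X < c * B := by
        rw [hcdef]
        have : X/B < (X/B + 1)/2 := by linarith
        calc X = (X/B) * B := by field_simp
          _ < (X/B + 1)/2 * B := by exact mul_lt_mul_of_pos_right this hB
      linarith [this, hgt]
  -- conclude
  have hut : u t ≤ max (ρ 0 ^ ((1:ℝ)/N) - (1/N) * ∫ s in (0:ℝ)..t, α s) 0 := by
    have : u t ≤ u 0 - B := by linarith
    exact le_trans this (le_max_left _ _)
  calc ρ t = u t ^ N := hu0 t ht
    _ ≤ (max (ρ 0 ^ ((1:ℝ)/N) - (1/N) * ∫ s in (0:ℝ)..t, α s) 0) ^ N :=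
        pow_le_pow_left₀ (hu_nonneg t ht) hut N
end

section
/- Let ρ : [0,∞) → [0,1] be continuous and nondecreasing with ρ(0) > 0, and let α : [0,∞) → [0,∞) be 1-periodic and integrable with α* = ∫_0^1 α(s) ds > 0. Assume ρ(t₂) - ρ(t₁) ≥ ∫_{t₁}^{t₂} α(s) (min(ρ(s), 1-ρ(s)))^{(N-1)/N} ds for all 0 ≤ t₁ ≤ t₂. Then there exists T ≤ 1 + N/(2^{1/N} α*) such that ρ(t) ≥ 1/2 for all t ≥ T. -/
/-!
While `ρ < 1/2`, the hypothesis is an integrated form of `ρ' ≥ α ρ^(1 - 1/N)`, i.e. of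
`(ρ^(1/N))' ≥ α / N`. Integrating over `[0, T]` and using `∫₀ᵀ α ≥ (T - 1) α*` pushes `ρ(T)^(1/N)`
up to `2^(-1/N)`, so `ρ(T) ≥ 1/2`. Since `ρ` is only continuous, the differential inequality is
integrated by continuity induction, with a constant `c < 1` of slack absorbing the variation of `ρ`
over short intervals; letting `c → 1` recovers the sharp constant.
-/
open MeasureTheory Set Filter Topology

-- The tangent line at `y` of the concave map `t ↦ t ^ θ` lies above its graph
-- (scaled by `y ^ (1 - θ)`).
lemma Real.mul_sub_le_rpow_mul_sub_rpow {x y θ : ℝ} (hx : 0 ≤ x) (hy : 0 < y) (hθ0 : 0 ≤ θ)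
    (hθ1 : θ ≤ 1) : θ * (y - x) ≤ y ^ (1 - θ) * (y ^ θ - x ^ θ) := by
  have hbern : (x / y) ^ θ ≤ 1 + θ * (x / y - 1) := by
    simpa using rpow_one_add_le_one_add_mul_self (s := x / y - 1)
      (by linarith [div_nonneg hx hy.le]) hθ0 hθ1
  have hyθ : 0 < y ^ θ := Real.rpow_pos_of_pos hy θ
  rw [Real.div_rpow hx hy.le, div_le_iff₀ hyθ] at hbern
  have hsplit : y ^ (1 - θ) * y ^ θ = y := by
    rw [← Real.rpow_add hy, sub_add_cancel, Real.rpow_one]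
  have key : y ^ θ * y ^ (1 - θ) * (1 + θ * (x / y - 1)) = y + θ * (x - y) := by
    rw [mul_comm (y ^ θ), hsplit]; field_simp
  nlinarith [Real.rpow_pos_of_pos hy (1 - θ)]

lemma mul_mul_le_rpow_sub_rpow {x y θ c J : ℝ} (hx : 0 ≤ x) (hy : 0 < y) (hθ0 : 0 ≤ θ)
    (hθ1 : θ ≤ 1) (hJ : 0 ≤ J) (hc : c * y ^ (1 - θ) ≤ x ^ (1 - θ))
    (hgrow : x ^ (1 - θ) * J ≤ y - x) : c * θ * J ≤ y ^ θ - x ^ θ := by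
  have hyp : 0 < y ^ (1 - θ) := Real.rpow_pos_of_pos hy _
  have htangent := Real.mul_sub_le_rpow_mul_sub_rpow hx hy hθ0 hθ1
  have : y ^ (1 - θ) * (c * θ * J) ≤ y ^ (1 - θ) * (y ^ θ - x ^ θ) :=
    calc y ^ (1 - θ) * (c * θ * J) = θ * ((c * y ^ (1 - θ)) * J) := by ring
      _ ≤ θ * (x ^ (1 - θ) * J) := by gcongr
      _ ≤ θ * (y - x) := by gcongr
      _ ≤ _ := htangent
  exact le_of_mul_le_mul_left this hyp

section Comparison

variable {ρ α : ℝ → ℝ} {a b θ : ℝ}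

lemma eventually_mul_integral_le_rpow_sub_rpow (hθ0 : 0 ≤ θ) (hθ1 : θ ≤ 1)
    (hρc : ContinuousOn ρ (Icc a b)) (hρmono : MonotoneOn ρ (Icc a b)) (hρa : 0 < ρ a)
    (hα : ∀ s ∈ Icc a b, 0 ≤ α s) (hαint : IntervalIntegrable α volume a b)
    (hineq : ∀ t₁ t₂, a ≤ t₁ → t₁ ≤ t₂ → t₂ ≤ b →
      ∫ s in t₁..t₂, α s * ρ s ^ (1 - θ) ≤ ρ t₂ - ρ t₁)
    {c : ℝ} (hc : c < 1) {u : ℝ} (hu : u ∈ Ico a b) :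
    ∀ᶠ v in 𝓝[>] u, c * θ * ∫ s in u..v, α s ≤ ρ v ^ θ - ρ u ^ θ := by
  have hu' : u ∈ Icc a b := Ico_subset_Icc_self hu
  have hρpos : ∀ s ∈ Icc a b, 0 < ρ s :=
    fun s hs => hρa.trans_le (hρmono (left_mem_Icc.2 (hs.1.trans hs.2)) hs hs.1)
  have hρu := hρpos u hu'
  have hρ_cont : ContinuousOn (fun s => ρ s ^ (1 - θ)) (Icc a b) :=
    hρc.rpow_const fun s hs => Or.inl (hρpos s hs).ne'
  have hnear : ∀ᶠ v in 𝓝[>] u, c * ρ v ^ (1 - θ) < ρ u ^ (1 - θ) := by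
    have hlt : c * ρ u ^ (1 - θ) < ρ u ^ (1 - θ) :=
      mul_lt_of_lt_one_left (Real.rpow_pos_of_pos hρu _) hc
    have hwithin : 𝓝[>] u ≤ 𝓝[Icc a b] u :=
      calc 𝓝[>] u ≤ 𝓝[≥] u := nhdsWithin_mono _ Ioi_subset_Ici_self
        _ = 𝓝[Icc u b] u := (nhdsWithin_Icc_eq_nhdsGE hu.2).symm
        _ ≤ 𝓝[Icc a b] u := nhdsWithin_mono _ (Icc_subset_Icc_left hu.1)
    exact hwithin (((hρ_cont u hu').const_mul c).eventually (gt_mem_nhds hlt))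
  filter_upwards [hnear, Ioc_mem_nhdsGT hu.2] with v hv hvb
  have hv' : v ∈ Icc a b := ⟨hu.1.trans hvb.1.le, hvb.2⟩
  have hsub : Icc u v ⊆ Icc a b := Icc_subset_Icc hu.1 hvb.2
  have hαuv : IntervalIntegrable α volume u v := hαint.mono_set (by
    rw [uIcc_of_le hvb.1.le, uIcc_of_le (hu.1.trans hu.2.le)]; exact hsub)
  have hgrow : ρ u ^ (1 - θ) * ∫ s in u..v, α s ≤ ρ v - ρ u :=
    calc ρ u ^ (1 - θ) * ∫ s in u..v, α s = ∫ s in u..v, α s * ρ u ^ (1 - θ) := by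
          rw [intervalIntegral.integral_mul_const, mul_comm]
      _ ≤ ∫ s in u..v, α s * ρ s ^ (1 - θ) := by
          refine intervalIntegral.integral_mono_on hvb.1.le (hαuv.mul_const _)
            (hαuv.mul_continuousOn ?_) fun s hs => ?_
          · rw [uIcc_of_le hvb.1.le]; exact hρ_cont.mono hsub
          · exact mul_le_mul_of_nonneg_left (Real.rpow_le_rpow hρu.le
              (hρmono hu' (hsub hs) hs.1) (by linarith)) (hα s (hsub hs))
      _ ≤ ρ v - ρ u := hineq u v hu.1 hvb.1.le hvb.2
  exact mul_mul_le_rpow_sub_rpow hρu.le (hρpos v hv') hθ0 hθ1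
    (intervalIntegral.integral_nonneg hvb.1.le fun s hs => hα s (hsub hs)) hv.le hgrow

lemma mul_integral_le_rpow_sub_rpow_of_lt_one (hθ0 : 0 ≤ θ) (hθ1 : θ ≤ 1) (hab : a ≤ b)
    (hρc : ContinuousOn ρ (Icc a b)) (hρmono : MonotoneOn ρ (Icc a b)) (hρa : 0 < ρ a)
    (hα : ∀ s ∈ Icc a b, 0 ≤ α s) (hαint : IntervalIntegrable α volume a b)
    (hineq : ∀ t₁ t₂, a ≤ t₁ → t₁ ≤ t₂ → t₂ ≤ b →
      ∫ s in t₁..t₂, α s * ρ s ^ (1 - θ) ≤ ρ t₂ - ρ t₁)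
    {c : ℝ} (hc : c < 1) :
    c * θ * ∫ s in a..b, α s ≤ ρ b ^ θ - ρ a ^ θ := by
  have hαint' : ∀ {t₁ t₂}, t₁ ∈ Icc a b → t₂ ∈ Icc a b → IntervalIntegrable α volume t₁ t₂ :=
    fun h₁ h₂ => hαint.mono_set (uIcc_subset_uIcc (by rwa [uIcc_of_le hab])
      (by rwa [uIcc_of_le hab]))
  let S := {u ∈ Icc a b | c * θ * ∫ s in a..u, α s ≤ ρ u ^ θ - ρ a ^ θ}
  have hS : IsClosed S := by
    refine isClosed_Icc.isClosed_le (ContinuousOn.const_smul ?_ (c * θ))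
      ((hρc.rpow_const fun _ _ => Or.inr hθ0).sub continuousOn_const)
    simpa only [uIcc_of_le hab] using intervalIntegral.continuousOn_primitive_interval' hαint
      left_mem_uIcc
  have hstep : ∀ u ∈ S ∩ Ico a b, ∀ z ∈ Ioi u, (S ∩ Ioc u z).Nonempty := by
    rintro u ⟨⟨hu, hSu⟩, hu'⟩ z hz
    have hz' : ∀ᶠ v in 𝓝[>] u, v ∈ Ioc u z := Ioc_mem_nhdsGT hz
    have hb' : ∀ᶠ v in 𝓝[>] u, v ∈ Ioc u b := Ioc_mem_nhdsGT hu'.2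
    obtain ⟨v, hv, hvz, hvb⟩ := ((eventually_mul_integral_le_rpow_sub_rpow hθ0 hθ1 hρc hρmono
      hρa hα hαint hineq hc hu').and (hz'.and hb')).exists
    have hvI : v ∈ Icc a b := ⟨hu'.1.trans hvz.1.le, hvb.2⟩
    refine ⟨v, ⟨hvI, ?_⟩, hvz⟩
    rw [← intervalIntegral.integral_add_adjacent_intervals (hαint' (left_mem_Icc.2 hab) hu)
      (hαint' hu hvI)]
    linarith
  have hSa : a ∈ S := ⟨left_mem_Icc.2 hab, by simp⟩
  exact (hS.inter isClosed_Icc |>.Icc_subset_of_forall_exists_gt hSa hstep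
    (right_mem_Icc.2 hab)).2

theorem mul_integral_le_rpow_sub_rpow (hθ0 : 0 ≤ θ) (hθ1 : θ ≤ 1) (hab : a ≤ b)
    (hρc : ContinuousOn ρ (Icc a b)) (hρmono : MonotoneOn ρ (Icc a b)) (hρa : 0 < ρ a)
    (hα : ∀ s ∈ Icc a b, 0 ≤ α s) (hαint : IntervalIntegrable α volume a b)
    (hineq : ∀ t₁ t₂, a ≤ t₁ → t₁ ≤ t₂ → t₂ ≤ b →
      ∫ s in t₁..t₂, α s * ρ s ^ (1 - θ) ≤ ρ t₂ - ρ t₁) :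
    θ * ∫ s in a..b, α s ≤ ρ b ^ θ - ρ a ^ θ := by
  have hlim : Tendsto (fun c : ℝ => c * (θ * ∫ s in a..b, α s)) (𝓝[<] 1)
      (𝓝 (θ * ∫ s in a..b, α s)) :=
    ((continuous_mul_const _).tendsto' 1 _ (one_mul _)).mono_left nhdsWithin_le_nhds
  refine le_of_tendsto hlim (eventually_nhdsWithin_of_forall fun c hc => ?_)
  rw [← mul_assoc]
  exact mul_integral_le_rpow_sub_rpow_of_lt_one hθ0 hθ1 hab hρc hρmono hρa hα hαint hineq hc

end Comparison

theorem Function.Periodic.sub_one_mul_integral_le {α : ℝ → ℝ} {P : ℝ} (hper : Periodic α P)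
    (hP : 0 < P) (hα : ∀ s, 0 ≤ α s) (hint : IntervalIntegrable α volume 0 P) (t : ℝ) :
    (t / P - 1) * ∫ s in 0..P, α s ≤ ∫ s in 0..t, α s := by
  have hprim : 0 ≤ sInf ((fun t => ∫ s in 0..t, α s) '' Icc 0 P) :=
    Real.sInf_nonneg (forall_mem_image.2 fun u hu =>
      intervalIntegral.integral_nonneg hu.1 fun s _ => hα s)
  have hfloor : (t / P - 1) * ∫ s in 0..P, α s ≤ ⌊t / P⌋ * ∫ s in 0..P, α s := by
    gcongr
    · exact intervalIntegral.integral_nonneg hP.le fun s _ => hα s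
    · exact (Int.sub_one_lt_floor _).le
  have := hper.sInf_add_zsmul_le_integral_of_pos hint hP t
  rw [zsmul_eq_mul] at this
  linarith

lemma intervalIntegral_mul_min_one_sub_rpow_of_le_half {f α : ℝ → ℝ} {p t₁ t₂ : ℝ}
    (ht : t₁ ≤ t₂) (hf : ∀ s ∈ Icc t₁ t₂, f s ≤ 1 / 2) :
    ∫ s in t₁..t₂, α s * min (f s) (1 - f s) ^ p = ∫ s in t₁..t₂, α s * f s ^ p := by
  refine intervalIntegral.integral_congr fun s hs => ?_
  rw [uIcc_of_le ht] at hs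
  simp only [min_eq_left (by linarith [hf s hs] : f s ≤ 1 - f s)]

theorem stmt1_general (N : ℕ) (hN : 1 ≤ N) (ρ α : ℝ → ℝ)
    (hρc : Continuous ρ)
    (hρmono : ∀ s t, 0 ≤ s → s ≤ t → ρ s ≤ ρ t)
    (hρ0 : 0 < ρ 0)
    (hαper : ∀ s, α (s + 1) = α s) (hαpos : ∀ s, 0 ≤ α s)
    (hαint : MeasureTheory.IntegrableOn α (Set.Icc 0 1))
    (hαstar : 0 < ∫ s in (0:ℝ)..1, α s)
    (hineq : ∀ t₁ t₂, 0 ≤ t₁ → t₁ ≤ t₂ →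
      ∫ s in t₁..t₂, α s * (min (ρ s) (1 - ρ s)) ^ (((N:ℝ) - 1)/N) ≤ ρ t₂ - ρ t₁) :
    ∃ T, T ≤ 1 + N / (2 ^ ((1:ℝ)/N) * ∫ s in (0:ℝ)..1, α s) ∧
      ∀ t, T ≤ t → 1/2 ≤ ρ t := by
  set A := ∫ s in (0:ℝ)..1, α s
  set B : ℝ := 2 ^ ((1:ℝ)/N)
  set T := 1 + N / (B * A)
  have hNpos : (0 : ℝ) < N := by exact_mod_cast hN
  have hT0 : 0 ≤ T := by positivity
  refine ⟨T, le_rfl, fun t ht => le_trans ?_ (hρmono T t hT0 ht)⟩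
  by_contra! hρT
  have hper : Function.Periodic α 1 := hαper
  have hα01 : IntervalIntegrable α volume 0 1 :=
    (intervalIntegrable_iff_integrableOn_Icc_of_le zero_le_one).2 hαint
  have hlower : N / B ≤ ∫ s in 0..T, α s :=
    calc N / B = (T / 1 - 1) * A := by simp only [T]; field_simp; ring
      _ ≤ _ := hper.sub_one_mul_integral_le one_pos hαpos hα01 T
  have hexp : 1 - (1:ℝ) / N = ((N:ℝ) - 1) / N := by field_simp
  have hgrowth : (1 / N) * ∫ s in 0..T, α s ≤ ρ T ^ ((1:ℝ) / N) - ρ 0 ^ ((1:ℝ) / N) :=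
    mul_integral_le_rpow_sub_rpow (by positivity) (div_le_one_of_le₀ (by exact_mod_cast hN)
      hNpos.le) hT0 hρc.continuousOn (fun s hs t _ hst => hρmono s t hs.1 hst) hρ0
      (fun s _ => hαpos s) (hper.intervalIntegrable₀ one_ne_zero hα01 0 T)
      fun t₁ t₂ h₁ h₁₂ h₂ => by
        rw [hexp, ← intervalIntegral_mul_min_one_sub_rpow_of_le_half h₁₂ fun s hs =>
          (hρmono s T (h₁.trans hs.1) (hs.2.trans h₂)).trans hρT.le]
        exact hineq t₁ t₂ h₁ h₁₂
  have hhalf : ρ T ^ ((1:ℝ) / N) < 1 / B := by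
    rw [one_div B, ← Real.inv_rpow zero_le_two, ← one_div]
    exact Real.rpow_lt_rpow (hρ0.trans_le (hρmono 0 T le_rfl hT0)).le hρT (by positivity)
  have hcontra : 1 / B < 1 / B :=
    calc 1 / B = (1 / N) * (N / B) := by field_simp
      _ ≤ (1 / N) * ∫ s in 0..T, α s := by gcongr
      _ ≤ ρ T ^ ((1:ℝ) / N) := by linarith [Real.rpow_nonneg hρ0.le ((1:ℝ) / N)]
      _ < 1 / B := hhalf
  exact lt_irrefl _ hcontra

theorem stmt1 (N : ℕ) (hN : 1 ≤ N) (ρ α : ℝ → ℝ)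
    (hρc : Continuous ρ)
    (hρmono : ∀ s t, 0 ≤ s → s ≤ t → ρ s ≤ ρ t)
    (hρ0 : 0 < ρ 0)
    (hρ : ∀ t, 0 ≤ t → ρ t ∈ Set.Icc (0:ℝ) 1)
    (hαper : ∀ s, α (s + 1) = α s) (hαpos : ∀ s, 0 ≤ α s)
    (hαint : MeasureTheory.IntegrableOn α (Set.Icc 0 1))
    (hαstar : 0 < ∫ s in (0:ℝ)..1, α s)
    (hineq : ∀ t₁ t₂, 0 ≤ t₁ → t₁ ≤ t₂ →
      ∫ s in t₁..t₂, α s * (min (ρ s) (1 - ρ s)) ^ (((N:ℝ) - 1)/N) ≤ ρ t₂ - ρ t₁) :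
    ∃ T, T ≤ 1 + N / (2 ^ ((1:ℝ)/N) * ∫ s in (0:ℝ)..1, α s) ∧
      ∀ t, T ≤ t → 1/2 ≤ ρ t :=
  stmt1_general N hN ρ α hρc hρmono hρ0 hαper hαpos hαint hαstar hineq
end

section
/- Let ẑ ∈ BV_loc(ℝ) (equivalently, assume ẑ : ℝ → ℝ is such that s ↦ ẑ(s) + |P| s is nondecreasing, where P ∈ ℝ^N \ {0} is fixed), and define z(x,t) = ẑ(⟨P,x⟩/|P| + t). If z is ℤ^{N+1}-periodic and ẑ is not constant, then P/|P| is a rational vector, i.e., P/|P| ∈ ℚ^N. -/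
/-! The periods of `ẑ` form an additive subgroup of `ℝ` containing `1` and every `Pᵢ / |P|`.
A subgroup of `ℝ` is either dense or cyclic. It cannot be dense: if `ẑ a < ẑ b`, a period `p`
slightly larger than `b - a` gives `ẑ b + |P| b ≤ ẑ (a + p) + |P| (a + p) = ẑ a + |P| (a + p)`,
which is impossible once `|P| (a + p - b) < ẑ b - ẑ a`. So it is `ℤ a` with `1 = n a`, and every
period `m a = m / n` is rational. -/

open RealInnerProductSpace

def periods {α β : Type*} [AddGroup α] (f : α → β) : AddSubgroup α where
  carrier := {c | Function.Periodic f c}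
  zero_mem' := fun x => by rw [add_zero]
  add_mem' := Function.Periodic.add_period
  neg_mem' := Function.Periodic.neg

theorem mem_periods {α β : Type*} [AddGroup α] {f : α → β} {c : α} :
    c ∈ periods f ↔ Function.Periodic f c :=
  Iff.rfl

section DensePeriods

variable {f : ℝ → ℝ} {c : ℝ}

theorem le_of_monotone_add_mul_of_dense_periods (hmono : Monotone fun s => f s + c * s)
    (hd : Dense (periods f : Set ℝ)) (a b : ℝ) : f b ≤ f a := by
  refine le_of_forall_pos_le_add fun ε hε => ?_
  have hδ : 0 < ε / (|c| + 1) := by positivity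
  obtain ⟨p, hp, hbp, hpb⟩ := hd.exists_between (lt_add_of_pos_right (b - a) hδ)
  have hstep : f b + c * b ≤ f a + c * (a + p) := by
    simpa only [mem_periods.1 hp a] using hmono (by linarith : b ≤ a + p)
  have hsmall : c * (a + p - b) ≤ ε :=
    calc c * (a + p - b) ≤ |c| * (ε / (|c| + 1)) :=
          mul_le_mul (le_abs_self c) (by linarith) (by linarith) (abs_nonneg c)
      _ ≤ ε := by
          rw [mul_div_assoc', div_le_iff₀ (by positivity)]
          nlinarith [abs_nonneg c]
  linarith

theorem eq_of_monotone_add_mul_of_dense_periods (hmono : Monotone fun s => f s + c * s)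
    (hd : Dense (periods f : Set ℝ)) (a b : ℝ) : f a = f b :=
  le_antisymm (le_of_monotone_add_mul_of_dense_periods hmono hd b a)
    (le_of_monotone_add_mul_of_dense_periods hmono hd a b)

end DensePeriods

theorem AddSubgroup.exists_rat_eq_of_not_dense {G : AddSubgroup ℝ} (hG : ¬Dense (G : Set ℝ))
    (h1 : (1 : ℝ) ∈ G) {x : ℝ} (hx : x ∈ G) : ∃ q : ℚ, x = q := by
  obtain ⟨a, rfl⟩ := G.dense_or_cyclic.resolve_left hG
  rw [← zmultiples_eq_closure, mem_zmultiples_iff] at h1 hx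
  obtain ⟨n, hn⟩ := h1
  obtain ⟨m, rfl⟩ := hx
  rw [zsmul_eq_mul] at hn
  have hn0 : (n : ℝ) ≠ 0 := left_ne_zero_of_mul_eq_one hn
  refine ⟨m / n, ?_⟩
  rw [zsmul_eq_mul, Rat.cast_div, Rat.cast_intCast, Rat.cast_intCast, eq_div_iff hn0]
  linear_combination (m : ℝ) * hn

theorem stmt8_general (N : ℕ) (P : EuclideanSpace ℝ (Fin N)) (zh : ℝ → ℝ)
    (hmono : Monotone fun s => zh s + ‖P‖ * s)
    (hper : ∀ (x : EuclideanSpace ℝ (Fin N)) (t : ℝ) (k : Fin N → ℤ) (m : ℤ),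
      zh (⟪P, x + (WithLp.equiv 2 (Fin N → ℝ)).symm (fun i => (k i : ℝ))⟫ / ‖P‖ + (t + m)) =
        zh (⟪P, x⟫ / ‖P‖ + t))
    (hnc : ∃ s₁ s₂, zh s₁ ≠ zh s₂) :
    ∀ i, ∃ r : ℚ, P i / ‖P‖ = r := by
  have hlattice (k : Fin N → ℤ) (m : ℤ) :
      ⟪P, (WithLp.equiv 2 (Fin N → ℝ)).symm (fun i => (k i : ℝ))⟫ / ‖P‖ + m ∈ periods zh := by
    intro s
    convert hper 0 s k m using 2 <;> simp only [zero_add, inner_zero_right, zero_div]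
    ring
  have hnd : ¬Dense (periods zh : Set ℝ) := fun hd => by
    obtain ⟨s₁, s₂, hne⟩ := hnc
    exact hne (eq_of_monotone_add_mul_of_dense_periods hmono hd s₁ s₂)
  have hone : (1 : ℝ) ∈ periods zh := by
    simpa [show (fun _ : Fin N => (0 : ℝ)) = 0 from rfl] using hlattice 0 1
  intro i
  have hcoord : P i / ‖P‖ ∈ periods zh := by
    have hsingle : (WithLp.equiv 2 (Fin N → ℝ)).symm (fun j => ((Pi.single i 1 : Fin N → ℤ) j : ℝ))
        = EuclideanSpace.single i 1 := by
      ext j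
      by_cases hj : j = i <;> simp [hj]
    simpa [hsingle, EuclideanSpace.inner_single_right] using hlattice (Pi.single i 1) 0
  exact AddSubgroup.exists_rat_eq_of_not_dense hnd hone hcoord

theorem stmt8 (N : ℕ) (P : EuclideanSpace ℝ (Fin N)) (hP : P ≠ 0) (zh : ℝ → ℝ)
    (hmono : Monotone fun s => zh s + ‖P‖ * s)
    (hper : ∀ (x : EuclideanSpace ℝ (Fin N)) (t : ℝ) (k : Fin N → ℤ) (m : ℤ),
      zh (⟪P, x + (WithLp.equiv 2 (Fin N → ℝ)).symm (fun i => (k i : ℝ))⟫ / ‖P‖ + (t + m)) =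
        zh (⟪P, x⟫ / ‖P‖ + t))
    (hnc : ∃ s₁ s₂, zh s₁ ≠ zh s₂) :
    ∀ i, ∃ r : ℚ, P i / ‖P‖ = r :=
  stmt8_general N P zh hmono hper hnc
end

section
/- Let K ⊂ ℝ^N be a nonempty closed set, and d(x) = dist(x, K) the distance function. Let E_σ = {x : d(x) ≤ σ} for σ > 0. Suppose E = K has the interior ball property of radius r > 0 (every boundary point of K lies on a closed ball of radius r contained in K). Then the projection map Π_σ : ∂E_σ → ∂K, sending x to its nearest point in K when unique, has a well-defined Lipschitz inverse on its image with Lipschitz constant at most (r+σ)/r. -/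
open scoped RealInnerProductSpace

set_option maxHeartbeats 1000000

theorem stmt14 (N : ℕ) (K : Set (EuclideanSpace ℝ (Fin N))) (hK : K.Nonempty)
    (hKc : IsClosed K) (r : ℝ) (hr : 0 < r)
    (hball : ∀ x ∈ frontier K, ∃ y, x ∈ Metric.closedBall y r ∧ Metric.closedBall y r ⊆ K)
    (σ : ℝ) (hσ : 0 < σ) :
    ∀ x₁ x₂ y₁ y₂ : EuclideanSpace ℝ (Fin N),
      x₁ ∈ frontier K → x₂ ∈ frontier K →
      Metric.infDist y₁ K = σ → Metric.infDist y₂ K = σ →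
      dist x₁ y₁ = σ → dist x₂ y₂ = σ →
      dist y₁ y₂ ≤ (r + σ) / r * dist x₁ x₂ := by
  intro x₁ x₂ y₁ y₂ hx₁ hx₂ hy₁ hy₂ hd₁ hd₂
  obtain ⟨c₁, hc₁m, hc₁s⟩ := hball x₁ hx₁
  obtain ⟨c₂, hc₂m, hc₂s⟩ := hball x₂ hx₂
  set ρ := r + σ with hρdef
  have hρ : 0 < ρ := by positivity
  -- step a : dist x c = r
  have hxc : ∀ x c : EuclideanSpace ℝ (Fin N), x ∈ frontier K →
      x ∈ Metric.closedBall c r → Metric.closedBall c r ⊆ K → dist x c = r := by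
    intro x c hx hm hs
    by_contra hne
    have hlt : dist x c < r := lt_of_le_of_ne (Metric.mem_closedBall.1 hm) hne
    have hxint : x ∈ interior K :=
      interior_maximal (Metric.ball_subset_closedBall.trans hs) Metric.isOpen_ball
        (Metric.mem_ball.2 hlt)
    exact hx.2 hxint
  have hxc₁ : dist x₁ c₁ = r := hxc x₁ c₁ hx₁ hc₁m hc₁s
  have hxc₂ : dist x₂ c₂ = r := hxc x₂ c₂ hx₂ hc₂m hc₂s
  -- step b : r + σ ≤ dist y c
  have hfar : ∀ y c : EuclideanSpace ℝ (Fin N), Metric.infDist y K = σ →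
      Metric.closedBall c r ⊆ K → ρ ≤ dist y c := by
    intro y c hy hs
    have hyK : y ∉ K := by
      intro h
      rw [Metric.infDist_zero_of_mem h] at hy
      linarith
    have hd : r < dist y c := by
      by_contra h
      exact hyK (hs (Metric.mem_closedBall.2 (not_lt.1 h)))
    set d := dist y c with hdd
    have hd0 : 0 < d := lt_trans hr hd
    set p : EuclideanSpace ℝ (Fin N) := c + (r / d) • (y - c) with hp
    have hpc : dist p c = r := by
      have h1 : p - c = (r / d) • (y - c) := by rw [hp]; abel
      rw [dist_eq_norm, h1, norm_smul, Real.norm_eq_abs, abs_of_pos (div_pos hr hd0),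
        ← dist_eq_norm, ← hdd]
      field_simp
    have hpK : p ∈ K := hs (Metric.mem_closedBall.2 (le_of_eq hpc))
    have hyp : dist y p = d - r := by
      rw [dist_eq_norm]
      have h2 : y - p = (1 - r / d) • (y - c) := by
        rw [hp, sub_smul, one_smul]; abel
      have h1 : (0:ℝ) ≤ 1 - r / d := by
        rw [sub_nonneg, div_le_one hd0]; exact hd.le
      rw [h2, norm_smul, Real.norm_eq_abs, abs_of_nonneg h1, ← dist_eq_norm, ← hdd]
      field_simp
    have := Metric.infDist_le_dist_of_mem (x := y) hpK
    rw [hy, hyp] at this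
    simpa [hρdef] using by linarith
  have hyc₁₁ : ρ ≤ dist y₁ c₁ := hfar y₁ c₁ hy₁ hc₁s
  have hyc₂₂ : ρ ≤ dist y₂ c₂ := hfar y₂ c₂ hy₂ hc₂s
  have hyc₁₂ : ρ ≤ dist y₁ c₂ := hfar y₁ c₂ hy₁ hc₂s
  have hyc₂₁ : ρ ≤ dist y₂ c₁ := hfar y₂ c₁ hy₂ hc₁s
  -- dist y c = ρ exactly
  have hyceq₁ : dist y₁ c₁ = ρ :=
    le_antisymm (by calc dist y₁ c₁ ≤ dist y₁ x₁ + dist x₁ c₁ := dist_triangle _ _ _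
                      _ = ρ := by rw [dist_comm y₁ x₁, hd₁, hxc₁, hρdef]; ring) hyc₁₁
  have hyceq₂ : dist y₂ c₂ = ρ :=
    le_antisymm (by calc dist y₂ c₂ ≤ dist y₂ x₂ + dist x₂ c₂ := dist_triangle _ _ _
                      _ = ρ := by rw [dist_comm y₂ x₂, hd₂, hxc₂, hρdef]; ring) hyc₂₂
  -- step c : x - c = (r/ρ) • (y - c)
  have hseg : ∀ x y c : EuclideanSpace ℝ (Fin N), dist x y = σ → dist x c = r →
      dist y c = ρ → x - c = (r / ρ) • (y - c) := by
    intro x y c hxy hxcr hycρ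
    have htri : dist c x + dist x y = dist c y := by
      rw [dist_comm c x, hxcr, hxy, dist_comm c y, hycρ, hρdef]
    have hw : Wbtw ℝ c x y := dist_add_dist_eq_iff.1 htri
    obtain ⟨t, ht, hteq⟩ := hw
    have hxeq : x - c = t • (y - c) := by
      have := hteq
      rw [AffineMap.lineMap_apply] at this
      simp only [vsub_eq_sub, vadd_eq_add] at this
      rw [← this]; abel
    have hnorm : ‖x - c‖ = t * ρ := by
      rw [hxeq, norm_smul, Real.norm_eq_abs, abs_of_nonneg ht.1, ← dist_eq_norm, hycρ]
    rw [← dist_eq_norm, hxcr] at hnorm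
    have htval : t = r / ρ := by
      field_simp at hnorm ⊢
      linarith
    rw [hxeq, htval]
  have hx1eq : x₁ - c₁ = (r / ρ) • (y₁ - c₁) := hseg x₁ y₁ c₁ hd₁ hxc₁ hyceq₁
  have hx2eq : x₂ - c₂ = (r / ρ) • (y₂ - c₂) := hseg x₂ y₂ c₂ hd₂ hxc₂ hyceq₂
  -- set up vectors
  set k := r / ρ with hk
  have hk0 : 0 < k := div_pos hr hρ
  have hk1 : k < 1 := by rw [hk, div_lt_one hρ]; linarith
  set e := c₁ - c₂ with he
  set w₁ := y₁ - c₁ with hw₁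
  set w₂ := y₂ - c₂ with hw₂
  have hnw₁ : ‖w₁‖ = ρ := by rw [hw₁, ← dist_eq_norm]; exact hyceq₁
  have hnw₂ : ‖w₂‖ = ρ := by rw [hw₂, ← dist_eq_norm]; exact hyceq₂
  have hcon₁ : ρ ≤ ‖e + w₁‖ := by
    have : e + w₁ = y₁ - c₂ := by rw [he, hw₁]; abel
    rw [this, ← dist_eq_norm]; exact hyc₁₂
  have hcon₂ : ρ ≤ ‖w₂ - e‖ := by
    have : w₂ - e = y₂ - c₁ := by rw [he, hw₂]; abel
    rw [this, ← dist_eq_norm]; exact hyc₂₁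
  -- scalar versions
  have hE1 : 0 ≤ ⟪e, e⟫ + 2 * ⟪e, w₁⟫ := by
    have h1 : ρ ^ 2 ≤ ‖e + w₁‖ ^ 2 := pow_le_pow_left₀ hρ.le hcon₁ 2
    rw [← real_inner_self_eq_norm_sq] at h1
    simp only [inner_add_left, inner_add_right] at h1
    have h2 : ⟪w₁, w₁⟫ = ρ ^ 2 := by rw [real_inner_self_eq_norm_sq, hnw₁]
    have h3 : ⟪w₁, e⟫ = ⟪e, w₁⟫ := real_inner_comm _ _
    nlinarith
  have hE2 : 0 ≤ ⟪e, e⟫ - 2 * ⟪e, w₂⟫ := by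
    have h1 : ρ ^ 2 ≤ ‖w₂ - e‖ ^ 2 := pow_le_pow_left₀ hρ.le hcon₂ 2
    rw [← real_inner_self_eq_norm_sq] at h1
    simp only [inner_sub_left, inner_sub_right] at h1
    have h2 : ⟪w₂, w₂⟫ = ρ ^ 2 := by rw [real_inner_self_eq_norm_sq, hnw₂]
    have h3 : ⟪w₂, e⟫ = ⟪e, w₂⟫ := real_inner_comm _ _
    nlinarith
  set v := w₁ - w₂ with hv
  have hS : 0 ≤ ‖e‖^2 + ⟪e, v⟫ := by
    have h1 : ⟪e, v⟫ = ⟪e, w₁⟫ - ⟪e, w₂⟫ := by rw [hv, inner_sub_right]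
    have h2 : ⟪e, e⟫ = ‖e‖^2 := real_inner_self_eq_norm_sq e
    linarith [hE1, hE2]
  have hm : 1 < ρ / r := by rw [lt_div_iff₀ hr]; linarith
  have hm0 : 0 ≤ ρ / r - 1 := by linarith
  have hkm : (ρ / r) * k = 1 := by rw [hk]; field_simp
  have expand1 : ‖e + v‖^2 = ‖e‖^2 + 2*⟪e,v⟫ + ‖v‖^2 := norm_add_sq_real e v
  have expand2 : ‖e + k•v‖^2 = ‖e‖^2 + 2*(k*⟪e,v⟫) + k^2*‖v‖^2 := by
    rw [norm_add_sq_real, real_inner_smul_right, norm_smul, Real.norm_eq_abs,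
      abs_of_pos hk0]
    ring
  have expand2' : ((ρ/r) * ‖e + k•v‖)^2 = (ρ/r)^2*‖e‖^2 + 2*((ρ/r)*⟪e,v⟫) + ‖v‖^2 := by
    linear_combination (ρ/r)^2 * expand2 + (2*(ρ/r)*⟪e,v⟫ + ((ρ/r)*k + 1)*‖v‖^2) * hkm
  have hsq : ‖e + v‖^2 ≤ ((ρ/r) * ‖e + k•v‖)^2 := by
    rw [expand1, expand2']
    nlinarith [mul_nonneg hm0 hS, mul_nonneg (mul_nonneg hm0 hm0) (sq_nonneg ‖e‖)]
  have h0 : 0 ≤ (ρ/r) * ‖e + k•v‖ := mul_nonneg (by positivity) (norm_nonneg _)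
  have final : ‖e + v‖ ≤ (ρ/r) * ‖e + k•v‖ := by
    nlinarith [norm_nonneg (e + v), hsq]
  have hyy : y₁ - y₂ = e + v := by rw [hv, he, hw₁, hw₂]; abel
  have hxx : x₁ - x₂ = e + k • v := by
    rw [hv, smul_sub, he, ← hx1eq, ← hx2eq]; abel
  rw [dist_eq_norm, dist_eq_norm, hyy, hxx]
  exact final
end
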